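/- For every integer d ≥ 2, n(d−1,d) = 3·2^{d−2}; that is, the maximum size of a (d−1)-neighborly code in S^d equals 3·2^{d−2}. -/

import Mathlib

/-- The three-letter alphabet `S = {0, 1, ∗}`. -/
inductive Tern | zero | one | star
deriving DecidableEq

instance : Fintype Tern where
  elems := {Tern.zero, Tern.one, Tern.star}
  complete := fun x => by cases x <;> simp

/-- `clash x y` is true iff both `x, y ∈ {0,1}` and `x ≠ y`. -/
def clash : Tern → Tern → Bool
  | Tern.zero, Tern.one => true
  | Tern.one, Tern.zero => true
  | _, _ => false

/-- `dist u v`: the number of positions where both letters are binary and they differ. -/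
def dist {d : ℕ} (u v : Fin d → Tern) : ℕ :=
  (Finset.univ.filter (fun i => clash (u i) (v i))).card

/-- A `k`-neighborly code in `S^d`: every two distinct members `u, v`
satisfy `1 ≤ dist(u,v) ≤ k`. -/
def IsNeighborlyCode (k d : ℕ) (V : Finset (Fin d → Tern)) : Prop :=
  ∀ u ∈ V, ∀ v ∈ V, u ≠ v → 1 ≤ dist u v ∧ dist u v ≤ k

/-- `n(k,d)`: the maximum size of a `k`-neighborly code in `S^d`. -/
noncomputable def nMax (k d : ℕ) : ℕ :=
  sSup {m : ℕ | ∃ V : Finset (Fin d → Tern), IsNeighborlyCode k d V ∧ V.card = m}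


/-! A word `u ∈ S^d` stands for the subcube of `{0,1}^d` obtained by filling its `∗`s with bits,
and words at distance at least `1` give disjoint subcubes. A word containing a `∗` covers at least
two points, while the points covered by the star-free words of a `(d-1)`-neighborly code contain
no antipodal pair `x, xᶜ`, so there are at most `2^(d-1)` of them. With `a` star-free and `b`
other words this gives `a + 2b ≤ 2^d` and `a ≤ 2^(d-1)`, hence `a + b ≤ 3·2^(d-2)`. Equality is
attained by the words `0x` with `x ∈ {0,1}^(d-1)` together with the words `1∗y` with
`y ∈ {0,1}^(d-2)`. -/

open Finset Matrix

theorem Finset.two_mul_card_le_of_compl_notMem {α : Type*} [BooleanAlgebra α] [Fintype α]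
    {s : Finset α} (hs : ∀ a ∈ s, aᶜ ∉ s) : 2 * #s ≤ Fintype.card α := by
  have hdisj : Disjoint s (s.map ⟨compl, compl_injective⟩) := by
    rw [disjoint_left]
    intro x hx hxc
    obtain ⟨a, ha, rfl⟩ := mem_map.1 hxc
    exact hs a ha hx
  refine (s.disjUnion _ hdisj).card_le_univ.trans_eq' ?_
  rw [Nat.two_mul, card_disjUnion, card_map]

namespace Tern

def ofBool : Bool → Tern
  | false => zero
  | true => one

theorem ofBool_injective : Function.Injective ofBool := by
  decide

def bits : Tern → Finset Bool
  | zero => {false}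
  | one => {true}
  | star => univ

theorem one_le_card_bits (a : Tern) : 1 ≤ #a.bits := by
  cases a <;> decide

@[simp]
theorem card_bits_star : #star.bits = 2 := rfl

end Tern

open Tern

@[simp]
theorem clash_star_left (a : Tern) : clash Tern.star a = false := by
  cases a <;> rfl

@[simp]
theorem clash_star_right (a : Tern) : clash a Tern.star = false := by
  cases a <;> rfl

@[simp]
theorem clash_ofBool (a b : Bool) : clash (ofBool a) (ofBool b) = (a != b) := by
  cases a <;> cases b <;> rfl

@[simp]
theorem clash_self (a : Tern) : clash a a = false := by
  cases a <;> rfl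

theorem disjoint_bits_of_clash {a b : Tern} (h : clash a b) : Disjoint a.bits b.bits := by
  cases a <;> cases b <;> simp_all [clash, bits]

theorem clash_of_mem_bits_of_compl_mem_bits {a b : Tern} (ha : a ≠ Tern.star)
    (hb : b ≠ Tern.star) {x : Bool} (hx : x ∈ a.bits) (hy : xᶜ ∈ b.bits) : clash a b := by
  cases a <;> cases b <;> cases x <;> simp_all [clash, bits]

section Dist

variable {d : ℕ} {u v : Fin d → Tern}

theorem dist_eq_of_forall_clash (h : ∀ i, clash (u i) (v i)) : dist u v = d := by
  simp [_root_.dist, h]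

theorem one_le_dist_and_dist_le_pred (i j : Fin d) (hi : clash (u i) (v i))
    (hj : clash (u j) (v j) = false) : 1 ≤ dist u v ∧ dist u v ≤ d - 1 := by
  refine ⟨card_pos.2 ⟨i, by simpa⟩, ?_⟩
  calc dist u v ≤ #(univ.erase j) := card_le_card fun k hk ↦ mem_erase.2
          ⟨by rintro rfl; simp_all, mem_univ k⟩
    _ = d - 1 := by simp

end Dist

def subcube {d : ℕ} (u : Fin d → Tern) : Finset (Fin d → Bool) :=
  Fintype.piFinset fun i ↦ (u i).bits

section Subcube

variable {d : ℕ} {u v : Fin d → Tern}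

theorem one_le_card_subcube (u : Fin d → Tern) : 1 ≤ #(subcube u) := by
  rw [subcube, Fintype.card_piFinset]
  exact one_le_prod' fun i _ ↦ (u i).one_le_card_bits

theorem two_le_card_subcube {i : Fin d} (h : u i = Tern.star) : 2 ≤ #(subcube u) := by
  rw [subcube, Fintype.card_piFinset]
  calc 2 = #(u i).bits := by rw [h, card_bits_star]
    _ ≤ _ := single_le_prod' (fun j _ ↦ (u j).one_le_card_bits) (mem_univ i)

theorem disjoint_subcube (h : 1 ≤ dist u v) : Disjoint (subcube u) (subcube v) := by
  obtain ⟨i, hi⟩ := card_pos.1 h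
  rw [mem_filter] at hi
  exact disjoint_left.2 fun x hu hv ↦ disjoint_left.1 (disjoint_bits_of_clash hi.2)
    (Fintype.mem_piFinset.1 hu i) (Fintype.mem_piFinset.1 hv i)

theorem clash_of_mem_subcube_of_compl_mem_subcube (hu : ∀ i, u i ≠ Tern.star)
    (hv : ∀ i, v i ≠ Tern.star) {x : Fin d → Bool} (hx : x ∈ subcube u)
    (hxc : xᶜ ∈ subcube v) (i : Fin d) : clash (u i) (v i) :=
  clash_of_mem_bits_of_compl_mem_bits (hu i) (hv i) (Fintype.mem_piFinset.1 hx i)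
    (Fintype.mem_piFinset.1 hxc i)

end Subcube

theorem four_mul_card_le_of_isNeighborlyCode {d : ℕ} (hd : 0 < d) {V : Finset (Fin d → Tern)}
    (hV : IsNeighborlyCode (d - 1) d V) : 4 * #V ≤ 3 * 2 ^ d := by
  classical
  have hcard : ∀ W ⊆ V, #(W.biUnion subcube) = ∑ u ∈ W, #(subcube u) :=
    fun W hW ↦ card_biUnion fun u hu v hv huv ↦ disjoint_subcube (hV u (hW hu) v (hW hv) huv).1
  set A := V.filter fun u ↦ ∀ i, u i ≠ Tern.star
  set B := V.filter fun u ↦ ¬∀ i, u i ≠ Tern.star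
  have hsum_V : #A + 2 * #B ≤ 2 ^ d := by
    calc #A + 2 * #B = ∑ u ∈ A, 1 + ∑ u ∈ B, 2 := by simp [mul_comm]
      _ ≤ ∑ u ∈ A, #(subcube u) + ∑ u ∈ B, #(subcube u) := by
        gcongr with u hu u hu
        · exact one_le_card_subcube u
        · obtain ⟨i, hi⟩ := not_forall_not.1 (mem_filter.1 hu).2
          exact two_le_card_subcube hi
      _ = #(V.biUnion subcube) := by rw [sum_filter_add_sum_filter_not, hcard V subset_rfl]
      _ ≤ 2 ^ d := by simpa using card_le_univ (V.biUnion subcube)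
  have hsum_A : 2 * #A ≤ 2 ^ d := by
    have hcompl : ∀ x ∈ A.biUnion subcube, xᶜ ∉ A.biUnion subcube := by
      simp only [mem_biUnion]
      rintro x ⟨u, hu, hx⟩ ⟨v, hv, hxc⟩
      obtain ⟨huV, hu⟩ := mem_filter.1 hu
      obtain ⟨hvV, hv⟩ := mem_filter.1 hv
      have hclash := clash_of_mem_subcube_of_compl_mem_subcube hu hv hx hxc
      rcases eq_or_ne u v with rfl | huv
      · simpa [clash_self] using hclash ⟨0, hd⟩
      · have := (hV u huV v hvV huv).2
        rw [dist_eq_of_forall_clash hclash] at this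
        omega
    calc 2 * #A ≤ 2 * ∑ u ∈ A, #(subcube u) := by
          gcongr
          simpa using card_nsmul_le_sum A _ 1 fun u _ ↦ one_le_card_subcube u
      _ = 2 * #(A.biUnion subcube) := by rw [hcard A (filter_subset _ _)]
      _ ≤ 2 ^ d := by simpa using two_mul_card_le_of_compl_notMem hcompl
  have hAB : #A + #B = #V := card_filter_add_card_filter_not _
  have hpow : 2 ^ d = 2 * 2 ^ (d - 1) := by rw [← pow_succ', Nat.sub_add_cancel hd]
  omega

def optimalCode (e : ℕ) : Finset (Fin (e + 2) → Tern) :=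
  univ.image (fun x : Fin (e + 1) → Bool ↦ vecCons Tern.zero (ofBool ∘ x)) ∪
    univ.image (fun y : Fin e → Bool ↦ vecCons Tern.one (vecCons Tern.star (ofBool ∘ y)))

theorem card_optimalCode (e : ℕ) : #(optimalCode e) = 3 * 2 ^ e := by
  rw [optimalCode, card_union_of_disjoint, card_image_of_injective, card_image_of_injective]
  · simp only [card_univ, Fintype.card_fun, Fintype.card_bool, Fintype.card_fin]
    ring
  · exact fun y y' h ↦ ofBool_injective.comp_left (vecCons_inj.1 (vecCons_inj.1 h).2).2
  · exact fun x x' h ↦ ofBool_injective.comp_left (vecCons_inj.1 h).2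
  · simp [disjoint_left, vecCons_inj]

theorem isNeighborlyCode_optimalCode (e : ℕ) :
    IsNeighborlyCode (e + 1) (e + 2) (optimalCode e) := by
  simp only [IsNeighborlyCode, optimalCode, mem_union, mem_image, mem_univ, true_and]
  rintro _ (⟨x, rfl⟩ | ⟨y, rfl⟩) _ (⟨x', rfl⟩ | ⟨y', rfl⟩) hne
  · obtain ⟨i, hi⟩ := Function.ne_iff.1 fun h : x = x' ↦ hne (by rw [h])
    exact one_le_dist_and_dist_le_pred i.succ 0 (by simpa using hi) (by simp)
  · exact one_le_dist_and_dist_le_pred 0 1 rfl (by simp)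
  · exact one_le_dist_and_dist_le_pred 0 1 rfl (by simp)
  · obtain ⟨i, hi⟩ := Function.ne_iff.1 fun h : y = y' ↦ hne (by rw [h])
    exact one_le_dist_and_dist_le_pred i.succ.succ 1 (by simpa using hi) (by simp)

/-- For every `d ≥ 2`, `n(d-1,d) = 3·2^{d-2}`. -/
theorem n_dsub1_d_eq (d : ℕ) (hd : 2 ≤ d) : nMax (d - 1) d = 3 * 2 ^ (d - 2) := by
  obtain ⟨e, rfl⟩ := Nat.exists_eq_add_of_le' hd
  refine IsGreatest.csSup_eq
    ⟨⟨optimalCode e, isNeighborlyCode_optimalCode e, card_optimalCode e⟩, ?_⟩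
  rintro _ ⟨V, hV, rfl⟩
  have := four_mul_card_le_of_isNeighborlyCode (by omega) hV
  simp only [Nat.add_sub_cancel, pow_add] at this ⊢
  omega
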